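/- Let ε > 0 and α > 1, and set β = (α − 1)(I(X;Y) + ε − d_α(Q_{X,Y}, Q_X Q_Y)). Over the random i.i.d. codebook 𝒞 of size 2^{nR}, the probability that Σ_{y^n} P_{𝒞,2}(y^n) ≥ 2·2^{−βn} is at most e^{−(1/3) 2^{n(R − β)}}. -/

import Mathlib

open Finset Real
open scoped BigOperators Classical

noncomputable section SoftCovering

/-- `p` is a probability mass function on the finite type `α`. -/
def IsPMF {α : Type*} [Fintype α] (p : α → ℝ) : Prop :=
  (∀ a, 0 ≤ p a) ∧ ∑ a, p a = 1

variable {𝒳 𝒴 : Type*} [Fintype 𝒳] [Fintype 𝒴]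

/-- The output distribution `Q_Y` on `𝒴` induced by the input distribution `Q_X`
and the channel `Q_{Y|X}`. -/
def outDist (QX : 𝒳 → ℝ) (QYX : 𝒳 → 𝒴 → ℝ) (y : 𝒴) : ℝ := ∑ x, QX x * QYX x y

/-- The `n`-fold i.i.d. product of a distribution `p`. -/
def prodDist {α : Type*} [Fintype α] (p : α → ℝ) (n : ℕ) (xs : Fin n → α) : ℝ :=
  ∏ i, p (xs i)

/-- The `n`-fold memoryless channel: `Q_{Y^n|X^n = xs}(ys)`. -/
def chanProd (QYX : 𝒳 → 𝒴 → ℝ) (n : ℕ) (xs : Fin n → 𝒳) (ys : Fin n → 𝒴) : ℝ :=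
  ∏ i, QYX (xs i) (ys i)

/-- The information density `ı_{X;Y}(x;y) = log₂ (Q_{Y|X}(y|x) / Q_Y(y))`, in bits. -/
def infoDensity (QX : 𝒳 → ℝ) (QYX : 𝒳 → 𝒴 → ℝ) (x : 𝒳) (y : 𝒴) : ℝ :=
  Real.logb 2 (QYX x y / outDist QX QYX y)

/-- The mutual information `I(X;Y)` of `(X,Y) ~ Q_X Q_{Y|X}`, in bits. -/
def mutualInfo (QX : 𝒳 → ℝ) (QYX : 𝒳 → 𝒴 → ℝ) : ℝ :=
  ∑ x, ∑ y, QX x * QYX x y * infoDensity QX QYX x y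

/-- The variance `V` of the information density under `(X,Y) ~ Q_X Q_{Y|X}`. -/
def infoVar (QX : 𝒳 → ℝ) (QYX : 𝒳 → 𝒴 → ℝ) : ℝ :=
  ∑ x, ∑ y, QX x * QYX x y * (infoDensity QX QYX x y - mutualInfo QX QYX) ^ 2

/-- The centered third absolute moment `ρ` of the information density. -/
def infoThird (QX : 𝒳 → ℝ) (QYX : 𝒳 → 𝒴 → ℝ) : ℝ :=
  ∑ x, ∑ y, QX x * QYX x y * |infoDensity QX QYX x y - mutualInfo QX QYX| ^ 3

/-- The Rényi divergence of order `a` between `Q_{X,Y} = Q_X Q_{Y|X}` and the product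
of its marginals `Q_X Q_Y`, in bits. -/
def renyiDiv (QX : 𝒳 → ℝ) (QYX : 𝒳 → 𝒴 → ℝ) (a : ℝ) : ℝ :=
  (a - 1)⁻¹ * Real.logb 2 (∑ x, ∑ y,
    (QX x * QYX x y) ^ a * (QX x * outDist QX QYX y) ^ (1 - a))

/-- Membership in the jointly typical set
`𝒜_ε = {(x^n,y^n) : (1/n) log₂ (Q_{Y^n|X^n=x^n}(y^n)/Q_{Y^n}(y^n)) ≤ I(X;Y) + ε}`. -/
def JTypical (QX : 𝒳 → ℝ) (QYX : 𝒳 → 𝒴 → ℝ) (n : ℕ) (ε : ℝ)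
    (xs : Fin n → 𝒳) (ys : Fin n → 𝒴) : Prop :=
  (n : ℝ)⁻¹ * Real.logb 2 (chanProd QYX n xs ys / prodDist (outDist QX QYX) n ys)
    ≤ mutualInfo QX QYX + ε

/-- The probability that `(X^n, Y^n) ~ Q_{X^n} Q_{Y^n|X^n}` is outside `𝒜_ε`. -/
def atypProb (QX : 𝒳 → ℝ) (QYX : 𝒳 → 𝒴 → ℝ) (n : ℕ) (ε : ℝ) : ℝ :=
  ∑ xs : Fin n → 𝒳, ∑ ys : Fin n → 𝒴,
    if ¬ JTypical QX QYX n ε xs ys then prodDist QX n xs * chanProd QYX n xs ys else 0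

/-- The induced output distribution `P_{Y^n|C} = 2^{-nR} ∑_m Q_{Y^n|X^n = x^n(m)}`
of a codebook `C` of size `M = 2^{nR}` (so `2^{-nR} = 1/M`). -/
def inducedDist (QYX : 𝒳 → 𝒴 → ℝ) (n M : ℕ) (C : Fin M → Fin n → 𝒳)
    (ys : Fin n → 𝒴) : ℝ :=
  (M : ℝ)⁻¹ * ∑ m, chanProd QYX n (C m) ys

/-- The typical part `P_{C,1}(y^n) = 2^{-nR} ∑_m Q_{Y^n|X^n=x^n(m)}(y^n) 1{(x^n(m),y^n) ∈ 𝒜_ε}`. -/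
def Ptyp (QX : 𝒳 → ℝ) (QYX : 𝒳 → 𝒴 → ℝ) (n M : ℕ) (ε : ℝ)
    (C : Fin M → Fin n → 𝒳) (ys : Fin n → 𝒴) : ℝ :=
  (M : ℝ)⁻¹ * ∑ m, if JTypical QX QYX n ε (C m) ys then chanProd QYX n (C m) ys else 0

/-- The atypical part `P_{C,2}(y^n) = 2^{-nR} ∑_m Q_{Y^n|X^n=x^n(m)}(y^n) 1{(x^n(m),y^n) ∉ 𝒜_ε}`. -/
def Patyp (QX : 𝒳 → ℝ) (QYX : 𝒳 → 𝒴 → ℝ) (n M : ℕ) (ε : ℝ)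
    (C : Fin M → Fin n → 𝒳) (ys : Fin n → 𝒴) : ℝ :=
  (M : ℝ)⁻¹ * ∑ m, if ¬ JTypical QX QYX n ε (C m) ys then chanProd QYX n (C m) ys else 0

/-- The density `D_{C,1}(y^n) = P_{C,1}(y^n)/Q_{Y^n}(y^n)
= 2^{-nR} ∑_m (Q_{Y^n|X^n=x^n(m)}(y^n)/Q_{Y^n}(y^n)) 1{(x^n(m),y^n) ∈ 𝒜_ε}`. -/
def Dtyp (QX : 𝒳 → ℝ) (QYX : 𝒳 → 𝒴 → ℝ) (n M : ℕ) (ε : ℝ)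
    (C : Fin M → Fin n → 𝒳) (ys : Fin n → 𝒴) : ℝ :=
  (M : ℝ)⁻¹ * ∑ m, if JTypical QX QYX n ε (C m) ys then
    chanProd QYX n (C m) ys / prodDist (outDist QX QYX) n ys else 0

/-- Total variation distance `(1/2) ∑_y |P y - Q y|` on a finite type. -/
def tvDist {β : Type*} [Fintype β] (P Q : β → ℝ) : ℝ := (1 / 2) * ∑ y, |P y - Q y|

/-- Probability of an event `E` over the random codebook of `M` codewords drawn
i.i.d. from `Q_{X^n}`. -/
def cbProb (QX : 𝒳 → ℝ) (n M : ℕ) (E : (Fin M → Fin n → 𝒳) → Prop) : ℝ :=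
  ∑ C : Fin M → Fin n → 𝒳, if E C then ∏ m, prodDist QX n (C m) else 0

/-- `𝒬(x)`: one minus the standard normal cumulative distribution function. -/
def gaussQ (x : ℝ) : ℝ :=
  (Real.sqrt (2 * Real.pi))⁻¹ * ∫ t in Set.Ioi x, Real.exp (-(t ^ 2 / 2))

/-- `𝒬⁻¹`, the inverse of `𝒬`. -/
def gaussQInv : ℝ → ℝ := Function.invFun gaussQ

/-! `∑_{y^n} P_{𝒞,2}(y^n)` is the average over the `M` i.i.d. codewords of the `[0,1]`-valued
`P[(x^n, Y^n) ∉ 𝒜_ε]`, whose mean is `P[(X^n, Y^n) ∉ 𝒜_ε]`. Markov's inequality applied to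
`(Q_{X^nY^n} / (2^{n(I+ε)} Q_{X^n} Q_{Y^n}))^{α-1}` bounds this mean by `μ = 2^{-βn}`, since the
expectation factorizes into `2^{n(α-1)(d_α - I - ε)}`. A multiplicative Chernoff bound then gives
`P[average ≥ 2μ] ≤ e^{-Mμ/3}`. -/

lemma sum_sum_prod_eq_pow {α β R : Type*} [Fintype α] [Fintype β] [CommSemiring R]
    (f : α → β → R) (n : ℕ) :
    ∑ xs : Fin n → α, ∑ ys : Fin n → β, ∏ i, f (xs i) (ys i) = (∑ x, ∑ y, f x y) ^ n := by
  rw [Fintype.sum_pow]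
  exact sum_congr rfl fun xs _ => (Fintype.prod_sum fun i y => f (xs i) y).symm

lemma IsPMF.exists_pos {α : Type*} [Fintype α] {p : α → ℝ} (hp : IsPMF p) : ∃ a, 0 < p a := by
  by_contra! h
  linarith [sum_nonpos fun a (_ : a ∈ univ) => h a, hp.2]

lemma IsPMF.prodDist {α : Type*} [Fintype α] {p : α → ℝ} (hp : IsPMF p) (n : ℕ) :
    IsPMF (prodDist p n) :=
  ⟨fun _ => prod_nonneg fun i _ => hp.1 _, by
    simp only [_root_.prodDist, ← Fintype.sum_pow, hp.2, one_pow]⟩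

lemma IsPMF.chanProd {α β : Type*} [Fintype β] {K : α → β → ℝ} (hK : ∀ x, IsPMF (K x))
    (n : ℕ) (xs : Fin n → α) : IsPMF (chanProd K n xs) :=
  ⟨fun _ => prod_nonneg fun i _ => (hK _).1 _, by
    simp only [_root_.chanProd, ← Fintype.prod_sum, (hK _).2, prod_const_one]⟩

lemma sum_prod_ite_le_two_rpow_mul {Ω : Type*} [Fintype Ω] {w : Ω → ℝ} (hw : ∀ x, 0 ≤ w x)
    (g : Ω → ℝ) (M : ℕ) (s : ℝ) :
    (∑ C : Fin M → Ω, if s ≤ ∑ m, g (C m) then ∏ m, w (C m) else 0)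
      ≤ 2 ^ (-s) * (∑ x, w x * 2 ^ g x) ^ M := by
  rw [Fintype.sum_pow, mul_sum]
  refine sum_le_sum fun C _ => ?_
  have hw' : 0 ≤ ∏ m, w (C m) := prod_nonneg fun m _ => hw _
  rw [prod_mul_distrib, ← rpow_sum_of_pos two_pos, mul_comm, mul_assoc, ← rpow_add two_pos]
  split_ifs with h
  · exact le_mul_of_one_le_right hw' (one_le_rpow one_le_two (by linarith))
  · positivity

lemma sum_mul_two_rpow_le_exp {Ω : Type*} [Fintype Ω] {w g : Ω → ℝ} (hw : IsPMF w)
    (hg0 : ∀ x, 0 ≤ g x) (hg1 : ∀ x, g x ≤ 1) :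
    ∑ x, w x * 2 ^ g x ≤ exp (∑ x, w x * g x) :=
  calc ∑ x, w x * 2 ^ g x ≤ ∑ x, w x * (1 + g x) := by
        refine sum_le_sum fun x _ => mul_le_mul_of_nonneg_left ?_ (hw.1 x)
        simpa [one_add_one_eq_two] using
          rpow_one_add_le_one_add_mul_self (s := 1) (by norm_num) (hg0 x) (hg1 x)
    _ = ∑ x, w x * g x + 1 := by simp only [mul_add, mul_one, sum_add_distrib, hw.2, add_comm]
    _ ≤ exp (∑ x, w x * g x) := add_one_le_exp _

/-- Multiplicative Chernoff bound `P[∑_m g(C_m) ≥ 2Mμ] ≤ e^{-Mμ/3}` for `C_1, …, C_M` i.i.d.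
with law `w`, `0 ≤ g ≤ 1` and `E[g] ≤ μ`. -/
theorem chernoff_two_mul_le {Ω : Type*} [Fintype Ω] {w g : Ω → ℝ} (hw : IsPMF w)
    (hg0 : ∀ x, 0 ≤ g x) (hg1 : ∀ x, g x ≤ 1) (M : ℕ) {μ : ℝ} (hμ : ∑ x, w x * g x ≤ μ) :
    (∑ C : Fin M → Ω, if 2 * M * μ ≤ ∑ m, g (C m) then ∏ m, w (C m) else 0)
      ≤ exp (-(1 / 3) * (M * μ)) := by
  have hμ0 : 0 ≤ μ := (sum_nonneg fun x _ => mul_nonneg (hw.1 x) (hg0 x)).trans hμ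
  have hmgf : 0 ≤ ∑ x, w x * 2 ^ g x := sum_nonneg fun x _ => mul_nonneg (hw.1 x) (by positivity)
  calc _ ≤ 2 ^ (-(2 * M * μ)) * (∑ x, w x * 2 ^ g x) ^ M :=
        sum_prod_ite_le_two_rpow_mul hw.1 g M _
    _ ≤ 2 ^ (-(2 * M * μ)) * exp μ ^ M := by
        gcongr
        exact (sum_mul_two_rpow_le_exp hw hg0 hg1).trans (exp_le_exp.2 hμ)
    _ = exp ((1 - 2 * log 2) * (M * μ)) := by
        rw [rpow_def_of_pos two_pos, ← exp_nat_mul, ← exp_add]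
        ring_nf
    _ ≤ exp (-(1 / 3) * (M * μ)) := by
        gcongr
        linarith [log_two_gt_d9]

lemma outDist_nonneg {α β : Type*} [Fintype α] {QX : α → ℝ} {QYX : α → β → ℝ}
    (hQX : ∀ x, 0 ≤ QX x) (hQYX : ∀ x y, 0 ≤ QYX x y) (y : β) : 0 ≤ outDist QX QYX y :=
  sum_nonneg fun x _ => mul_nonneg (hQX x) (hQYX x y)

lemma mul_le_outDist {α β : Type*} [Fintype α] {QX : α → ℝ} {QYX : α → β → ℝ}
    (hQX : ∀ x, 0 ≤ QX x) (hQYX : ∀ x y, 0 ≤ QYX x y) (x : α) (y : β) :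
    QX x * QYX x y ≤ outDist QX QYX y :=
  single_le_sum (f := fun x => QX x * QYX x y) (fun x _ => mul_nonneg (hQX x) (hQYX x y))
    (mem_univ x)

lemma prodDist_mul_chanProd_eq_zero {QX : 𝒳 → ℝ} {QYX : 𝒳 → 𝒴 → ℝ} (hQX : ∀ x, 0 ≤ QX x)
    (hQYX : ∀ x y, 0 ≤ QYX x y) {n : ℕ} (xs : Fin n → 𝒳) {ys : Fin n → 𝒴}
    (h : prodDist (outDist QX QYX) n ys = 0) : prodDist QX n xs * chanProd QYX n xs ys = 0 := by
  obtain ⟨i, -, hi⟩ := prod_eq_zero_iff.1 h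
  rw [prodDist, chanProd, ← prod_mul_distrib]
  exact prod_eq_zero (mem_univ i) <|
    le_antisymm (hi ▸ mul_le_outDist hQX hQYX _ _) (mul_nonneg (hQX _) (hQYX _ _))

lemma le_rpow_mul_rpow_mul_rpow_of_mul_lt {p q t a : ℝ} (hq : 0 < q) (ht : 0 < t) (ha : 1 ≤ a)
    (h : t * q < p) : p ≤ p ^ a * q ^ (1 - a) * t ^ (1 - a) := by
  have hp : 0 < p := (mul_pos ht hq).trans h
  have hratio : 1 ≤ p / (t * q) := (one_le_div (mul_pos ht hq)).2 h.le
  calc p = p * 1 := (mul_one p).symm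
    _ ≤ p * (p / (t * q)) ^ (a - 1) := by gcongr; exact one_le_rpow hratio (by linarith)
    _ = p ^ a * q ^ (1 - a) * t ^ (1 - a) := by
      rw [div_rpow hp.le (mul_pos ht hq).le, mul_rpow ht.le hq.le,
        show 1 - a = -(a - 1) by ring, rpow_neg hq.le, rpow_neg ht.le,
        show p ^ a = p * p ^ (a - 1) by rw [← rpow_one_add' hp.le (by linarith)]; ring_nf]
      field_simp

lemma two_rpow_mul_lt_chanProd_of_not_JTypical {QX : 𝒳 → ℝ} {QYX : 𝒳 → 𝒴 → ℝ} {n : ℕ}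
    (hn : 0 < n) {ε : ℝ} {xs : Fin n → 𝒳} {ys : Fin n → 𝒴}
    (hout : 0 < prodDist (outDist QX QYX) n ys) (hchan : 0 < chanProd QYX n xs ys)
    (h : ¬ JTypical QX QYX n ε xs ys) :
    2 ^ (n * (mutualInfo QX QYX + ε)) * prodDist (outDist QX QYX) n ys
      < chanProd QYX n xs ys := by
  rw [JTypical, not_le, lt_inv_mul_iff₀ (by positivity)] at h
  rw [← lt_div_iff₀ hout]
  exact (lt_logb_iff_rpow_lt one_lt_two (div_pos hchan hout)).1 h

/-- The summand `Q_{XY}(x,y)^a (Q_X Q_Y)(x,y)^{1-a}` of `2^{(a-1) d_a}`. -/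
def renyiSummand {α β : Type*} [Fintype α] (QX : α → ℝ) (QYX : α → β → ℝ) (a : ℝ) (x : α)
    (y : β) : ℝ :=
  (QX x * QYX x y) ^ a * (QX x * outDist QX QYX y) ^ (1 - a)

lemma renyiSummand_nonneg {α β : Type*} [Fintype α] {QX : α → ℝ} {QYX : α → β → ℝ}
    (hQX : ∀ x, 0 ≤ QX x) (hQYX : ∀ x y, 0 ≤ QYX x y) (a : ℝ) (x : α) (y : β) :
    0 ≤ renyiSummand QX QYX a x y :=
  mul_nonneg (rpow_nonneg (mul_nonneg (hQX x) (hQYX x y)) _)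
    (rpow_nonneg (mul_nonneg (hQX x) (outDist_nonneg hQX hQYX y)) _)

lemma prodDist_mul_chanProd_le_of_not_JTypical {QX : 𝒳 → ℝ} {QYX : 𝒳 → 𝒴 → ℝ}
    (hQX : ∀ x, 0 ≤ QX x) (hQYX : ∀ x y, 0 ≤ QYX x y) {n : ℕ} (hn : 0 < n) {ε a : ℝ}
    (ha : 1 < a) {xs : Fin n → 𝒳} {ys : Fin n → 𝒴} (h : ¬ JTypical QX QYX n ε xs ys) :
    prodDist QX n xs * chanProd QYX n xs ys ≤
      (∏ i, renyiSummand QX QYX a (xs i) (ys i))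
        * (2 ^ (n * (mutualInfo QX QYX + ε))) ^ (1 - a) := by
  have hout := outDist_nonneg hQX hQYX
  have hfactor : ∏ i, renyiSummand QX QYX a (xs i) (ys i)
      = (prodDist QX n xs * chanProd QYX n xs ys) ^ a
        * (prodDist QX n xs * prodDist (outDist QX QYX) n ys) ^ (1 - a) := by
    simp only [renyiSummand, prodDist, chanProd, ← prod_mul_distrib]
    rw [prod_mul_distrib, finsetProd_rpow _ _ (fun i _ => mul_nonneg (hQX _) (hQYX _ _)),
      finsetProd_rpow _ _ (fun i _ => mul_nonneg (hQX _) (hout _))]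
  rw [hfactor]
  have hin₀ : 0 ≤ prodDist QX n xs := prod_nonneg fun i _ => hQX _
  have hchan₀ : 0 ≤ chanProd QYX n xs ys := prod_nonneg fun i _ => hQYX _ _
  have hprod₀ : 0 ≤ prodDist (outDist QX QYX) n ys := prod_nonneg fun i _ => hout _
  rcases (mul_nonneg hin₀ hchan₀).eq_or_lt with hzero | hpos
  · rw [← hzero]
    exact mul_nonneg (mul_nonneg (by positivity) (rpow_nonneg (mul_nonneg hin₀ hprod₀) _))
      (by positivity)
  have hin : 0 < prodDist QX n xs := pos_of_mul_pos_left hpos hchan₀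
  have hchan : 0 < chanProd QYX n xs ys := pos_of_mul_pos_right hpos hin₀
  have hprod : 0 < prodDist (outDist QX QYX) n ys :=
    hprod₀.lt_of_ne fun h0 => hpos.ne' (prodDist_mul_chanProd_eq_zero hQX hQYX xs h0.symm)
  refine le_rpow_mul_rpow_mul_rpow_of_mul_lt (mul_pos hin hprod) (by positivity) ha.le ?_
  rw [mul_left_comm]
  exact mul_lt_mul_of_pos_left (two_rpow_mul_lt_chanProd_of_not_JTypical hn hprod hchan h) hin

lemma renyiDiv_sum_pos {QX : 𝒳 → ℝ} {QYX : 𝒳 → 𝒴 → ℝ} (hQX : IsPMF QX)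
    (hQYX : ∀ x, IsPMF (QYX x)) (a : ℝ) :
    0 < ∑ x, ∑ y, renyiSummand QX QYX a x y := by
  obtain ⟨x, hx⟩ := hQX.exists_pos
  obtain ⟨y, hy⟩ := (hQYX x).exists_pos
  have hchan : ∀ x y, 0 ≤ QYX x y := fun x => (hQYX x).1
  have hout : 0 < outDist QX QYX y := (mul_pos hx hy).trans_le (mul_le_outDist hQX.1 hchan x y)
  have hterm := renyiSummand_nonneg hQX.1 hchan a
  refine sum_pos' (fun x _ => sum_nonneg fun y _ => hterm x y) ⟨x, mem_univ x, ?_⟩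
  exact sum_pos' (fun y _ => hterm x y) ⟨y, mem_univ y,
    mul_pos (rpow_pos_of_pos (mul_pos hx hy) _) (rpow_pos_of_pos (mul_pos hx hout) _)⟩

lemma two_rpow_mul_renyiDiv {QX : 𝒳 → ℝ} {QYX : 𝒳 → 𝒴 → ℝ} (hQX : IsPMF QX)
    (hQYX : ∀ x, IsPMF (QYX x)) {a : ℝ} (ha : a ≠ 1) :
    (2 : ℝ) ^ ((a - 1) * renyiDiv QX QYX a)
      = ∑ x, ∑ y, renyiSummand QX QYX a x y := by
  rw [renyiDiv, ← mul_assoc, mul_inv_cancel₀ (sub_ne_zero.2 ha), one_mul]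
  exact rpow_logb two_pos (by norm_num) (renyiDiv_sum_pos hQX hQYX a)

def atypCondProb (QX : 𝒳 → ℝ) (QYX : 𝒳 → 𝒴 → ℝ) (n : ℕ) (ε : ℝ) (xs : Fin n → 𝒳) : ℝ :=
  ∑ ys, if ¬ JTypical QX QYX n ε xs ys then chanProd QYX n xs ys else 0

lemma atypCondProb_nonneg {QX : 𝒳 → ℝ} {QYX : 𝒳 → 𝒴 → ℝ} (hQYX : ∀ x y, 0 ≤ QYX x y)
    (n : ℕ) (ε : ℝ) (xs : Fin n → 𝒳) : 0 ≤ atypCondProb QX QYX n ε xs :=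
  sum_nonneg fun ys _ => by
    split_ifs
    exacts [le_refl (0 : ℝ), prod_nonneg fun i _ => hQYX _ _]

lemma atypCondProb_le_one {QX : 𝒳 → ℝ} {QYX : 𝒳 → 𝒴 → ℝ} (hQYX : ∀ x, IsPMF (QYX x))
    (n : ℕ) (ε : ℝ) (xs : Fin n → 𝒳) : atypCondProb QX QYX n ε xs ≤ 1 := by
  rw [← (IsPMF.chanProd hQYX n xs).2]
  refine sum_le_sum fun ys _ => ?_
  split_ifs
  exacts [(IsPMF.chanProd hQYX n xs).1 ys, le_rfl]

lemma sum_prodDist_mul_atypCondProb (QX : 𝒳 → ℝ) (QYX : 𝒳 → 𝒴 → ℝ) (n : ℕ) (ε : ℝ) :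
    ∑ xs, prodDist QX n xs * atypCondProb QX QYX n ε xs = atypProb QX QYX n ε := by
  simp only [atypCondProb, atypProb, mul_sum, mul_ite, mul_zero]

lemma sum_Patyp (QX : 𝒳 → ℝ) (QYX : 𝒳 → 𝒴 → ℝ) (n M : ℕ) (ε : ℝ) (C : Fin M → Fin n → 𝒳) :
    ∑ ys, Patyp QX QYX n M ε C ys = (M : ℝ)⁻¹ * ∑ m, atypCondProb QX QYX n ε (C m) := by
  simp only [Patyp, atypCondProb, ← mul_sum]
  rw [sum_comm]

lemma atypProb_le_one {QX : 𝒳 → ℝ} {QYX : 𝒳 → 𝒴 → ℝ} (hQX : IsPMF QX)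
    (hQYX : ∀ x, IsPMF (QYX x)) (n : ℕ) (ε : ℝ) : atypProb QX QYX n ε ≤ 1 := by
  rw [← sum_prodDist_mul_atypCondProb, ← ((hQX.prodDist n).2)]
  exact sum_le_sum fun xs _ =>
    mul_le_of_le_one_right ((hQX.prodDist n).1 xs) (atypCondProb_le_one hQYX n ε xs)

theorem atypProb_le_two_rpow {QX : 𝒳 → ℝ} {QYX : 𝒳 → 𝒴 → ℝ} (hQX : IsPMF QX)
    (hQYX : ∀ x, IsPMF (QYX x)) (n : ℕ) (ε : ℝ) {a : ℝ} (ha : 1 < a) :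
    atypProb QX QYX n ε
      ≤ 2 ^ (-((a - 1) * (mutualInfo QX QYX + ε - renyiDiv QX QYX a) * n)) := by
  rcases n.eq_zero_or_pos with rfl | hn
  · simpa using atypProb_le_one hQX hQYX 0 ε
  set c := mutualInfo QX QYX + ε
  have hchan : ∀ x y, 0 ≤ QYX x y := fun x => (hQYX x).1
  calc atypProb QX QYX n ε
      ≤ ∑ xs : Fin n → 𝒳, ∑ ys : Fin n → 𝒴,
          (∏ i, renyiSummand QX QYX a (xs i) (ys i)) * (2 ^ (n * c)) ^ (1 - a) := by
        refine sum_le_sum fun xs _ => sum_le_sum fun ys _ => ?_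
        split_ifs with h
        · exact mul_nonneg (prod_nonneg fun i _ => renyiSummand_nonneg hQX.1 hchan a _ _)
            (by positivity)
        · exact prodDist_mul_chanProd_le_of_not_JTypical hQX.1 hchan hn ha h
    _ = (2 ^ ((a - 1) * renyiDiv QX QYX a)) ^ n * (2 ^ (n * c)) ^ (1 - a) := by
        rw [two_rpow_mul_renyiDiv hQX hQYX ha.ne', ← sum_sum_prod_eq_pow]
        simp only [sum_mul]
    _ = 2 ^ (-((a - 1) * (c - renyiDiv QX QYX a) * n)) := by
        rw [← rpow_natCast, ← rpow_mul two_pos.le, ← rpow_mul two_pos.le, ← rpow_add two_pos]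
        ring_nf

theorem atypical_mass_chernoff_general
    {𝒳 𝒴 : Type*} [Fintype 𝒳] [Fintype 𝒴]
    (QX : 𝒳 → ℝ) (QYX : 𝒳 → 𝒴 → ℝ) (hQX : IsPMF QX) (hQYX : ∀ x, IsPMF (QYX x))
    (R : ℝ) (n M : ℕ) (hM : (M : ℝ) = 2 ^ ((n : ℝ) * R))
    (ε : ℝ) (a : ℝ) (ha : 1 < a)
    (β : ℝ) (hβ : β = (a - 1) * (mutualInfo QX QYX + ε - renyiDiv QX QYX a)) :
    cbProb QX n M (fun C => 2 * 2 ^ (-(β * n)) ≤ ∑ ys, Patyp QX QYX n M ε C ys)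
      ≤ Real.exp (-(1 / 3) * 2 ^ ((n : ℝ) * (R - β))) := by
  set μ : ℝ := 2 ^ (-(β * n)) with hμ
  have hM0 : (0 : ℝ) < M := hM ▸ rpow_pos_of_pos two_pos _
  have hmean : ∑ xs, prodDist QX n xs * atypCondProb QX QYX n ε xs ≤ μ := by
    rw [sum_prodDist_mul_atypCondProb, hμ, hβ]
    exact atypProb_le_two_rpow hQX hQYX n ε ha
  have hevent : ∀ C : Fin M → Fin n → 𝒳, (2 * μ ≤ ∑ ys, Patyp QX QYX n M ε C ys)
      ↔ 2 * M * μ ≤ ∑ m, atypCondProb QX QYX n ε (C m) := fun C => by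
    rw [sum_Patyp, le_inv_mul_iff₀ hM0, mul_left_comm, mul_assoc]
  calc cbProb QX n M (fun C => 2 * μ ≤ ∑ ys, Patyp QX QYX n M ε C ys)
      = ∑ C : Fin M → Fin n → 𝒳, if 2 * M * μ ≤ ∑ m, atypCondProb QX QYX n ε (C m)
          then ∏ m, prodDist QX n (C m) else 0 :=
        sum_congr rfl fun C _ => if_congr (hevent C) rfl rfl
    _ ≤ exp (-(1 / 3) * (M * μ)) :=
        chernoff_two_mul_le (hQX.prodDist n) (atypCondProb_nonneg (fun x => (hQYX x).1) n ε)
          (atypCondProb_le_one hQYX n ε) M hmean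
    _ = exp (-(1 / 3) * 2 ^ ((n : ℝ) * (R - β))) := by
        rw [hM, ← rpow_add two_pos]
        ring_nf

/-- **Chernoff bound for the atypical mass over the random codebook (Eq. (21)).**
With `β = (α − 1)(I(X;Y) + ε − d_α(Q_{X,Y}, Q_X Q_Y))`, the probability over the
random codebook `𝒞` of size `M = 2^{nR}` that `∑_{y^n} P_{𝒞,2}(y^n) ≥ 2·2^{−βn}`
is at most `e^{−(1/3) 2^{n(R−β)}}`. -/
theorem atypical_mass_chernoff
    {𝒳 𝒴 : Type*} [Fintype 𝒳] [Fintype 𝒴]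
    (QX : 𝒳 → ℝ) (QYX : 𝒳 → 𝒴 → ℝ) (hQX : IsPMF QX) (hQYX : ∀ x, IsPMF (QYX x))
    (R : ℝ) (n M : ℕ) (hM : (M : ℝ) = 2 ^ ((n : ℝ) * R))
    (ε : ℝ) (hε : 0 < ε) (a : ℝ) (ha : 1 < a)
    (β : ℝ) (hβ : β = (a - 1) * (mutualInfo QX QYX + ε - renyiDiv QX QYX a)) :
    cbProb QX n M (fun C => 2 * 2 ^ (-(β * n)) ≤ ∑ ys, Patyp QX QYX n M ε C ys)
      ≤ Real.exp (-(1 / 3) * 2 ^ ((n : ℝ) * (R - β))) :=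
  atypical_mass_chernoff_general QX QYX hQX hQYX R n M hM ε a ha β hβ
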